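/- arXiv:1405.2197 — 2 statements merged into one kernel-verified Lean document; each statement's English description precedes it below -/
import Mathlib

section
/- If M is a maximal matching in a cubic (3-regular) graph G on n vertices, then |M| ≥ 3n/10. -/
def SimpleGraph.IsMatchingSet {V : Type*} (G : SimpleGraph V) (M : Finset (Sym2 V)) : Prop :=
  (M : Set (Sym2 V)) ⊆ G.edgeSet ∧
    (M : Set (Sym2 V)).Pairwise fun e f => ∀ v : V, v ∈ e → v ∉ f

def SimpleGraph.IsMaximalMatchingSet {V : Type*} [DecidableEq V] (G : SimpleGraph V)
    (M : Finset (Sym2 V)) : Prop :=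
  G.IsMatchingSet M ∧ ∀ e ∈ G.edgeSet, G.IsMatchingSet (insert e M) → e ∈ M

/-- A vertex is covered (black) if it is an endpoint of an edge of the matching. -/
def MatchCovered {V : Type*} (M : Finset (Sym2 V)) (v : V) : Prop := ∃ e ∈ M, v ∈ e

/-- A maximal matching in a cubic graph on n vertices has at least 3n/10 edges. -/
theorem stmt2 {V : Type*} [Fintype V] [DecidableEq V] (G : SimpleGraph V)
    [DecidableRel G.Adj] (hreg : G.IsRegularOfDegree 3)
    (M : Finset (Sym2 V)) (hM : G.IsMaximalMatchingSet M) :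
    (M.card : ℚ) ≥ 3 * Fintype.card V / 10 := by
  classical
  set B : Finset V := Finset.univ.filter (MatchCovered M) with hBdef
  set W : Finset V := Finset.univ.filter (fun v => ¬ MatchCovered M v) with hWdef
  have hWB : B.card + W.card = Fintype.card V := by
    rw [hBdef, hWdef]
    simpa using Finset.card_filter_add_card_filter_not (s := Finset.univ)
      (p := MatchCovered M)
  -- Uncovered vertices form an independent set.
  have hInd : ∀ v w : V, ¬ MatchCovered M v → ¬ MatchCovered M w → ¬ G.Adj v w := by
    intro v w hv hw hadj
    have he : s(v, w) ∈ G.edgeSet := hadj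
    have hins : G.IsMatchingSet (insert s(v, w) M) := by
      constructor
      · intro e he'
        simp only [Finset.coe_insert, Set.mem_insert_iff] at he'
        rcases he' with rfl | he'
        · exact he
        · exact hM.1.1 he'
      · rw [Finset.coe_insert]
        apply Set.Pairwise.insert hM.1.2
        intro f hf hne
        constructor
        · intro u hu hu'
          rcases (Sym2.mem_iff).1 hu with rfl | rfl
          · exact hv ⟨f, hf, hu'⟩
          · exact hw ⟨f, hf, hu'⟩
        · intro u hu hu'
          rcases (Sym2.mem_iff).1 hu' with rfl | rfl
          · exact hv ⟨f, hf, hu⟩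
          · exact hw ⟨f, hf, hu⟩
    have : s(v, w) ∈ M := hM.2 _ he hins
    exact hv ⟨_, this, Sym2.mem_mk_left v w⟩
  -- neighbors of white vertices are black
  have hNW : ∀ v ∈ W, G.neighborFinset v ⊆ B := by
    intro v hv u hu
    rw [SimpleGraph.mem_neighborFinset] at hu
    rw [hWdef, Finset.mem_filter] at hv
    rw [hBdef, Finset.mem_filter]
    refine ⟨Finset.mem_univ _, ?_⟩
    by_contra hu'
    exact hInd v u hv.2 hu' hu
  -- each black vertex has at most 2 white neighbors
  have hNB : ∀ b ∈ B, (G.neighborFinset b ∩ W).card ≤ 2 := by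
    intro b hb
    rw [hBdef, Finset.mem_filter] at hb
    obtain ⟨e, heM, hbe⟩ := hb.2
    set c := Sym2.Mem.other hbe with hc
    have hspec : s(b, c) = e := Sym2.other_spec hbe
    have hce : c ∈ e := by rw [← hspec]; exact Sym2.mem_mk_right b c
    have hadj : G.Adj b c := by
      have := hM.1.1 heM
      rw [← hspec] at this
      exact this
    have hcB : c ∈ B := by
      rw [hBdef, Finset.mem_filter]
      exact ⟨Finset.mem_univ _, e, heM, hce⟩
    have hsub : G.neighborFinset b ∩ W ⊆ G.neighborFinset b \ {c} := by
      intro u hu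
      rw [Finset.mem_inter] at hu
      rw [Finset.mem_sdiff]
      refine ⟨hu.1, ?_⟩
      intro hu'
      rw [Finset.mem_singleton] at hu'
      subst hu'
      rw [hWdef, Finset.mem_filter] at hu
      exact hu.2.2 ⟨e, heM, hce⟩
    have hcN : ({c} : Finset V) ⊆ G.neighborFinset b := by
      simp [SimpleGraph.mem_neighborFinset, hadj]
    calc (G.neighborFinset b ∩ W).card ≤ (G.neighborFinset b \ {c}).card :=
          Finset.card_le_card hsub
      _ = (G.neighborFinset b).card - 1 := by rw [Finset.card_sdiff_of_subset hcN, Finset.card_singleton]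
      _ = 2 := by rw [← SimpleGraph.degree, hreg b]
  -- double counting adjacent (white, black) pairs
  have hcount : 3 * W.card ≤ 2 * B.card := by
    have hL : ∑ v ∈ W, (B.filter (fun b => G.Adj v b)).card = 3 * W.card := by
      have : ∀ v ∈ W, (B.filter (fun b => G.Adj v b)).card = 3 := by
        intro v hv
        have : B.filter (fun b => G.Adj v b) = G.neighborFinset v := by
          ext u
          simp only [Finset.mem_filter, SimpleGraph.mem_neighborFinset]
          constructor
          · rintro ⟨_, h⟩; exact h
          · intro h; exact ⟨hNW v hv (by rwa [SimpleGraph.mem_neighborFinset]), h⟩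
        rw [this, ← SimpleGraph.degree, hreg v]
      rw [Finset.sum_congr rfl this, Finset.sum_const, smul_eq_mul, mul_comm]
    have hswap : ∑ v ∈ W, (B.filter (fun b => G.Adj v b)).card
        = ∑ b ∈ B, (W.filter (fun v => G.Adj v b)).card := by
      simp only [Finset.card_filter]
      exact Finset.sum_comm
    have hR : ∑ b ∈ B, (W.filter (fun v => G.Adj v b)).card ≤ 2 * B.card := by
      have : ∀ b ∈ B, (W.filter (fun v => G.Adj v b)).card ≤ 2 := by
        intro b hb
        have hsub : W.filter (fun v => G.Adj v b) ⊆ G.neighborFinset b ∩ W := by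
          intro u hu
          rw [Finset.mem_filter] at hu
          rw [Finset.mem_inter, SimpleGraph.mem_neighborFinset]
          exact ⟨hu.2.symm, hu.1⟩
        exact le_trans (Finset.card_le_card hsub) (hNB b hb)
      calc ∑ b ∈ B, (W.filter (fun v => G.Adj v b)).card ≤ ∑ _b ∈ B, 2 :=
            Finset.sum_le_sum this
        _ = 2 * B.card := by rw [Finset.sum_const, smul_eq_mul, mul_comm]
    omega
  -- at most 2*|M| black vertices
  have hBM : B.card ≤ 2 * M.card := by
    have hsub : B ⊆ M.biUnion (fun e => Finset.univ.filter (· ∈ e)) := by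
      intro b hb
      rw [hBdef, Finset.mem_filter] at hb
      obtain ⟨e, heM, hbe⟩ := hb.2
      exact Finset.mem_biUnion.2 ⟨e, heM, Finset.mem_filter.2 ⟨Finset.mem_univ _, hbe⟩⟩
    calc B.card ≤ (M.biUnion (fun e => Finset.univ.filter (· ∈ e))).card :=
          Finset.card_le_card hsub
      _ ≤ ∑ e ∈ M, (Finset.univ.filter (· ∈ e)).card := Finset.card_biUnion_le
      _ ≤ ∑ _e ∈ M, 2 := by
          apply Finset.sum_le_sum
          intro e _
          induction e using Sym2.ind with
          | _ x y =>
            have : Finset.univ.filter (· ∈ s(x, y)) = {x, y} := by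
              ext u; simp [Sym2.mem_iff]
            rw [this]
            exact le_trans (Finset.card_insert_le _ _) (by simp)
      _ = 2 * M.card := by rw [Finset.sum_const, smul_eq_mul, mul_comm]
  have hfinal : 3 * Fintype.card V ≤ 10 * M.card := by omega
  rw [ge_iff_le, div_le_iff₀ (by norm_num : (0:ℚ) < 10)]
  calc (3:ℚ) * Fintype.card V = ((3 * Fintype.card V : ℕ) : ℚ) := by push_cast; ring
    _ ≤ ((10 * M.card : ℕ) : ℚ) := by exact_mod_cast hfinal
    _ = M.card * 10 := by push_cast; ring
end

section
/- Let G be a patch (a 2-connected plane graph with all faces pentagons or hexagons except possibly the outer face B, all interior vertices of degree 3, and all boundary vertices of degree 2 or 3) containing exactly p pentagonal faces. Then n₂(B) − n₃(B) = 6 − p, where n₂(B) and n₃(B) are the numbers of degree-2 and degree-3 vertices incident to the outer face B. -/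
/-- A patch: a 2-connected plane graph (encoded combinatorially via its faces,
Euler's formula and the face–edge handshake identity) whose inner faces are
pentagons or hexagons, whose interior vertices have degree 3, and whose
boundary vertices (those on the outer face) have degree 2 or 3. -/
structure Patch (V : Type*) [Fintype V] where
  G : SimpleGraph V
  F : Type
  [instF : Fintype F]
  len : F → ℕ
  outer : F
  boundary : Finset V
  inner_pent_hex : ∀ f : F, f ≠ outer → len f = 5 ∨ len f = 6
  interior_deg : ∀ v : V, v ∉ boundary → (G.neighborSet v).ncard = 3
  boundary_deg : ∀ v ∈ boundary, (G.neighborSet v).ncard = 2 ∨ (G.neighborSet v).ncard = 3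
  outer_len : len outer = boundary.card
  euler : (Fintype.card V : ℤ) - G.edgeSet.ncard + Fintype.card F = 2
  handshake : ∑ f : F, len f = 2 * G.edgeSet.ncard

attribute [instance] Patch.instF

/-- For a patch with p pentagons and outer face boundary B: n₂(B) - n₃(B) = 6 - p. -/
theorem stmt6 {V : Type*} [Fintype V] (P : Patch V) :
    ({v : V | v ∈ P.boundary ∧ (P.G.neighborSet v).ncard = 2}.ncard : ℤ)
        - {v : V | v ∈ P.boundary ∧ (P.G.neighborSet v).ncard = 3}.ncard
      = 6 - Nat.card {f : P.F // f ≠ P.outer ∧ P.len f = 5} := by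
  classical
  -- neighborSet ncard is the degree
  have hdeg : ∀ v, (P.G.neighborSet v).ncard = P.G.degree v := fun v => by
    rw [Set.ncard_eq_toFinset_card']; rfl
  have hE : P.G.edgeSet.ncard = P.G.edgeFinset.card := by
    rw [Set.ncard_eq_toFinset_card']
    congr 1
  set ec := P.G.edgeFinset.card with hec
  -- vertex sets
  set B2 := P.boundary.filter (fun v => P.G.degree v = 2) with hB2
  set B3 := P.boundary.filter (fun v => P.G.degree v = 3) with hB3
  set I := (Finset.univ : Finset V) \ P.boundary with hI
  have hneg : P.boundary.filter (fun v => ¬ P.G.degree v = 2) = B3 := by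
    rw [hB3]
    apply Finset.filter_congr
    intro v hv
    rcases P.boundary_deg v hv with h | h <;> rw [hdeg] at h <;> simp [h]
  -- boundary splits
  have hBsplit : P.boundary.card = B2.card + B3.card := by
    rw [← Finset.card_filter_add_card_filter_not
      (s := P.boundary) (p := fun v => P.G.degree v = 2), hneg]
  have hIcard : I.card + P.boundary.card = Fintype.card V := by
    rw [hI, Finset.card_sdiff_add_card_eq_card (Finset.subset_univ _),
      Finset.card_univ]
  -- vertex handshake
  have hvsum : 3 * I.card + (2 * B2.card + 3 * B3.card) = 2 * ec := by
    have hI3 : ∀ v ∈ I, P.G.degree v = 3 := by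
      intro v hv
      rw [hI, Finset.mem_sdiff] at hv
      have := P.interior_deg v hv.2
      rwa [hdeg] at this
    have h2' : ∀ v ∈ B2, P.G.degree v = 2 := fun v hv => by
      rw [hB2] at hv; exact (Finset.mem_filter.mp hv).2
    have h3' : ∀ v ∈ B3, P.G.degree v = 3 := fun v hv => by
      rw [hB3] at hv; exact (Finset.mem_filter.mp hv).2
    rw [← P.G.sum_degrees_eq_twice_card_edges,
      ← Finset.sum_sdiff (Finset.subset_univ P.boundary), ← hI,
      ← Finset.sum_filter_add_sum_filter_not P.boundary
        (fun v => P.G.degree v = 2), hneg, ← hB2,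
      Finset.sum_eq_card_nsmul hI3, Finset.sum_eq_card_nsmul h2',
      Finset.sum_eq_card_nsmul h3', smul_eq_mul, smul_eq_mul, smul_eq_mul]
    ring
  -- face sets
  set S5 := (Finset.univ.erase P.outer).filter (fun f => P.len f = 5) with hS5
  set S6 := (Finset.univ.erase P.outer).filter (fun f => ¬ P.len f = 5) with hS6
  have hS6' : ∀ f ∈ S6, P.len f = 6 := by
    intro f hf
    rw [hS6, Finset.mem_filter, Finset.mem_erase] at hf
    rcases P.inner_pent_hex f hf.1.1 with h | h
    · exact absurd h hf.2
    · exact h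
  have hFcard : Fintype.card P.F = 1 + (S5.card + S6.card) := by
    have h1 : S5.card + S6.card = (Finset.univ.erase P.outer).card := by
      rw [hS5, hS6, Finset.card_filter_add_card_filter_not]
    have h2 : (Finset.univ.erase P.outer).card = Fintype.card P.F - 1 := by
      rw [Finset.card_erase_of_mem (Finset.mem_univ _), Finset.card_univ]
    have h3 : 1 ≤ Fintype.card P.F := Fintype.card_pos_iff.mpr ⟨P.outer⟩
    omega
  -- face handshake
  have hfsum : P.boundary.card + (5 * S5.card + 6 * S6.card) = 2 * ec := by
    rw [← hE, ← P.handshake,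
      ← Finset.sum_erase_add _ _ (Finset.mem_univ P.outer),
      P.outer_len, add_comm]
    have h5' : ∀ f ∈ S5, P.len f = 5 := fun f hf => by
      rw [hS5] at hf; exact (Finset.mem_filter.mp hf).2
    rw [← Finset.sum_filter_add_sum_filter_not (Finset.univ.erase P.outer)
      (fun f => P.len f = 5), ← hS5, ← hS6,
      Finset.sum_eq_card_nsmul h5', Finset.sum_eq_card_nsmul hS6',
      smul_eq_mul, smul_eq_mul]
    ring
  -- rewrite the goal in terms of the finsets
  have hg2 : {v : V | v ∈ P.boundary ∧ (P.G.neighborSet v).ncard = 2}.ncard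
      = B2.card := by
    rw [show {v : V | v ∈ P.boundary ∧ (P.G.neighborSet v).ncard = 2} = ↑B2 by
      ext v; simp [hB2, hdeg]]
    exact Set.ncard_coe_finset _
  have hg3 : {v : V | v ∈ P.boundary ∧ (P.G.neighborSet v).ncard = 3}.ncard
      = B3.card := by
    rw [show {v : V | v ∈ P.boundary ∧ (P.G.neighborSet v).ncard = 3} = ↑B3 by
      ext v; simp [hB3, hdeg]]
    exact Set.ncard_coe_finset _
  have hg5 : Nat.card {f : P.F // f ≠ P.outer ∧ P.len f = 5} = S5.card := by
    rw [Nat.card_eq_fintype_card, Fintype.card_subtype]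
    congr 1
    ext f
    simp [hS5, Finset.mem_erase, and_comm]
  rw [hg2, hg3, hg5]
  have heuler := P.euler
  rw [hE] at heuler
  omega
end
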